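/- arXiv:0804.0704 — 4 statements merged into one kernel-verified Lean document; each statement's English description precedes it below -/
import Mathlib

section
/- Let (W,S) be a Coxeter system indexed by I and let w ∈ W. Then the set I^-(w) = {i ∈ I : ℓ(w s_i) = ℓ(w) - 1} is a spherical subset of I, i.e. the standard parabolic subgroup generated by {s_i : i ∈ I^-(w)} is finite. -/
/-!
Let `J` be the right descent set of `w`. The Bruhat interval `[1, w]` contains `1` and, by the
lifting property, is stable under right multiplication by `s i` for every right descent `i` of
`w`, so it contains `W_J`. It is finite: by the strong exchange condition, walking down a Bruhat
chain from `w` only ever deletes letters from a fixed word for `w`.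

Strong exchange comes from Tits' cocycle. The generators act on `W × ZMod 2` (pairs `(t, ε)`
modelling the roots `±α_t`) compatibly with the braid relations, and the sign picked up by
`(t, 0)` under a word is the parity of the number of occurrences of `t` in its right inversion
sequence; that parity therefore depends only on the product of the word.
-/

open List

namespace CoxeterSystem

variable {B W : Type*} [Group W] {M : CoxeterMatrix B} (cs : CoxeterSystem M W)

local prefix:100 "s" => cs.simple
local prefix:100 "π" => cs.wordProd
local prefix:100 "ℓ" => cs.length
local prefix:100 "ris " => cs.rightInvSeq
local prefix:100 "lis " => cs.leftInvSeq

section SignedConjugation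

open Classical

noncomputable def signedConjSimple (i : B) (p : W × ZMod 2) : W × ZMod 2 :=
  (s i * p.1 * s i, p.2 + if p.1 = s i then 1 else 0)

theorem signedConjSimple_involutive (i : B) : Function.Involutive (cs.signedConjSimple i) := by
  rintro ⟨t, ε⟩
  have hconj : s i * (s i * t * s i) * s i = t := by
    simp [mul_assoc, simple_mul_simple_cancel_left]
  have hfix : s i * t * s i = s i ↔ t = s i := by
    constructor
    · intro h
      simpa [h, mul_assoc, simple_mul_simple_cancel_left] using hconj.symm
    · rintro rfl
      simp [simple_mul_simple_self]
  simp only [signedConjSimple, hconj, hfix, add_assoc, CharTwo.add_self_eq_zero, add_zero]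

noncomputable def signedConjSimplePerm (i : B) : Equiv.Perm (W × ZMod 2) :=
  (cs.signedConjSimple_involutive i).toPerm

theorem prod_map_signedConjSimplePerm_apply (ω : List B) (p : W × ZMod 2) :
    (ω.map cs.signedConjSimplePerm).prod p = (π ω * p.1 * (π ω)⁻¹, p.2 + (ris ω).count p.1) := by
  induction ω with
  | nil => simp
  | cons i ω ih =>
    have hcond : π ω * p.1 * (π ω)⁻¹ = s i ↔ (π ω)⁻¹ * s i * π ω = p.1 := by
      constructor <;> intro h <;> rw [← h] <;> group
    simp only [map_cons, prod_cons, Equiv.Perm.mul_apply, ih, signedConjSimplePerm,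
      Function.Involutive.coe_toPerm, signedConjSimple, rightInvSeq, count_cons, beq_iff_eq, hcond,
      wordProd_cons, mul_inv_rev, inv_simple, Prod.mk.injEq]
    constructor
    · group
    · push_cast; ring

theorem pow_mul_eq_prod_map_reverse_alternatingWord {G : Type*} [Monoid G] (f : B → G)
    (i i' : B) (m : ℕ) :
    (f i * f i') ^ m = ((alternatingWord i' i (2 * m)).reverse.map f).prod := by
  induction m with
  | zero => simp [alternatingWord]
  | succ m ih =>
    rw [pow_succ', ih, show 2 * (m + 1) = 2 * m + 1 + 1 by ring, alternatingWord_succ,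
      alternatingWord_succ]
    simp [mul_assoc]

theorem leftInvSeq_alternatingWord_eq_append (i i' : B) :
    lis (alternatingWord i' i (2 * M i i')) =
      ((range (M i i')).map fun k ↦ π alternatingWord i i' (2 * k + 1)) ++
        (range (M i i')).map fun k ↦ π alternatingWord i i' (2 * k + 1) := by
  have hperiod (k : ℕ) : π alternatingWord i i' (2 * (M i i' + k) + 1) =
      π alternatingWord i i' (2 * k + 1) := by
    simp only [prod_alternatingWord_eq_mul_pow, show ∀ n, ¬ Even (2 * n + 1) by simp [parity_simps],
      if_false, show ∀ n, (2 * n + 1) / 2 = n by omega, pow_add, simple_mul_simple_pow, one_mul]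
  have hlis : lis (alternatingWord i' i (2 * M i i')) =
      (range (M i i' + M i i')).map fun k ↦ π alternatingWord i i' (2 * k + 1) := by
    refine ext_getElem (by simp [two_mul]) fun k hk _ ↦ ?_
    rw [cs.getElem_leftInvSeq_alternatingWord i' i _ k (by simpa using hk)]
    simp
  rw [hlis, range_add, map_append, map_map]
  exact congrArg _ (map_congr_left fun k _ ↦ hperiod k)

theorem isLiftable_signedConjSimplePerm : M.IsLiftable cs.signedConjSimplePerm := by
  intro i i'
  rw [pow_mul_eq_prod_map_reverse_alternatingWord]
  ext p : 1
  rw [prod_map_signedConjSimplePerm_apply, wordProd_reverse, rightInvSeq_reverse, count_reverse,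
    leftInvSeq_alternatingWord_eq_append, count_append,
    ZMod.natCast_eq_zero_iff_even.mpr ⟨_, rfl⟩, prod_alternatingWord_eq_mul_pow]
  simp

noncomputable def signedConj : W →* Equiv.Perm (W × ZMod 2) :=
  cs.lift ⟨cs.signedConjSimplePerm, cs.isLiftable_signedConjSimplePerm⟩

theorem signedConj_wordProd_apply (ω : List B) (p : W × ZMod 2) :
    cs.signedConj (π ω) p = (π ω * p.1 * (π ω)⁻¹, p.2 + (ris ω).count p.1) := by
  rw [← prod_map_signedConjSimplePerm_apply, wordProd, map_list_prod, map_map]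
  congr 3
  exact funext (cs.lift_apply_simple cs.isLiftable_signedConjSimplePerm)

noncomputable def rightInvIndicator (w t : W) : ZMod 2 := (cs.signedConj w (t, 0)).2

theorem rightInvIndicator_wordProd (ω : List B) (t : W) :
    cs.rightInvIndicator (π ω) t = (ris ω).count t := by
  simp [rightInvIndicator, signedConj_wordProd_apply]

theorem signedConj_apply (w : W) (p : W × ZMod 2) :
    cs.signedConj w p = (w * p.1 * w⁻¹, p.2 + cs.rightInvIndicator w p.1) := by
  obtain ⟨ω, rfl⟩ := cs.wordProd_surjective w
  rw [signedConj_wordProd_apply, rightInvIndicator_wordProd]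

theorem rightInvIndicator_mul (a b t : W) :
    cs.rightInvIndicator (a * b) t =
      cs.rightInvIndicator b t + cs.rightInvIndicator a (b * t * b⁻¹) := by
  change (cs.signedConj (a * b) (t, 0)).2 = _
  rw [map_mul, Equiv.Perm.mul_apply, signedConj_apply cs b, signedConj_apply cs a, zero_add]

theorem rightInvIndicator_one (t : W) : cs.rightInvIndicator 1 t = 0 := by
  simpa using cs.rightInvIndicator_wordProd [] t

theorem rightInvIndicator_simple_self (i : B) : cs.rightInvIndicator (s i) (s i) = 1 := by
  simpa using cs.rightInvIndicator_wordProd [i] (s i)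

theorem rightInvIndicator_self {t : W} (ht : cs.IsReflection t) :
    cs.rightInvIndicator t t = 1 := by
  obtain ⟨v, i, rfl⟩ := ht
  have hconj : v⁻¹ * (v * s i * v⁻¹) * v⁻¹⁻¹ = s i := by group
  have h₁ := cs.rightInvIndicator_mul (v * s i) v⁻¹ (v * s i * v⁻¹)
  have h₂ := cs.rightInvIndicator_mul v (s i) (s i)
  have h₃ := cs.rightInvIndicator_mul v v⁻¹ (v * s i * v⁻¹)
  rw [hconj] at h₁ h₃
  rw [inv_simple, simple_mul_simple_cancel_right, rightInvIndicator_simple_self] at h₂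
  rw [mul_inv_cancel, rightInvIndicator_one] at h₃
  linear_combination h₁ + h₂ - h₃

theorem mem_rightInvSeq_of_rightInvIndicator_eq_one {ω : List B} {t : W}
    (h : cs.rightInvIndicator (π ω) t = 1) : t ∈ ris ω := by
  rw [rightInvIndicator_wordProd] at h
  refine count_pos_iff.mp (Nat.pos_of_ne_zero fun h0 ↦ ?_)
  simp [h0] at h

theorem isRightInversion_of_rightInvIndicator_eq_one {w t : W}
    (h : cs.rightInvIndicator w t = 1) : cs.IsRightInversion w t := by
  obtain ⟨ω, hω, rfl⟩ := cs.exists_isReduced w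
  exact cs.isRightInversion_of_mem_rightInvSeq hω (cs.mem_rightInvSeq_of_rightInvIndicator_eq_one h)

theorem rightInvIndicator_eq_one_of_isRightInversion {w t : W} (h : cs.IsRightInversion w t) :
    cs.rightInvIndicator w t = 1 := by
  obtain h0 | h1 := (by decide : ∀ a : ZMod 2, a = 0 ∨ a = 1) (cs.rightInvIndicator w t)
  -- otherwise `t` would be a right inversion of `w * t` as well
  · have hmul := cs.rightInvIndicator_mul w t t
    rw [rightInvIndicator_self cs h.1, h.1.mul_self, one_mul, h.1.inv] at hmul
    have := (cs.isRightInversion_of_rightInvIndicator_eq_one (by rw [hmul, h0, add_zero])).2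
    rw [mul_assoc, h.1.mul_self, mul_one] at this
    exact (lt_asymm this h.2).elim
  · exact h1

theorem mem_rightInvSeq_of_isRightInversion {ω : List B} {t : W}
    (h : cs.IsRightInversion (π ω) t) : t ∈ ris ω :=
  cs.mem_rightInvSeq_of_rightInvIndicator_eq_one (cs.rightInvIndicator_eq_one_of_isRightInversion h)

end SignedConjugation

theorem exists_mul_eq_wordProd_eraseIdx {ω : List B} {t : W} (h : cs.IsRightInversion (π ω) t) :
    ∃ j < ω.length, π ω * t = π (ω.eraseIdx j) := by
  obtain ⟨j, hj, rfl⟩ := getElem_of_mem (cs.mem_rightInvSeq_of_isRightInversion h)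
  refine ⟨j, by simpa using hj, ?_⟩
  rw [← getD_eq_getElem _ 1, wordProd_mul_getD_rightInvSeq]

section Bruhat

def BruhatLE (u w : W) : Prop :=
  Relation.ReflTransGen (fun x y ↦ ∃ t, cs.IsRightInversion x t ∧ y = x * t) w u

variable {cs}

theorem BruhatLE.refl (w : W) : cs.BruhatLE w w := Relation.ReflTransGen.refl

theorem BruhatLE.trans {u v w : W} (huv : cs.BruhatLE u v) (hvw : cs.BruhatLE v w) :
    cs.BruhatLE u w :=
  Relation.ReflTransGen.trans hvw huv

theorem IsRightInversion.bruhatLE_mul {w t : W} (h : cs.IsRightInversion w t) :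
    cs.BruhatLE (w * t) w :=
  Relation.ReflTransGen.single ⟨t, h, rfl⟩

theorem BruhatLE.exists_sublist {u : W} {ρ : List B} (h : cs.BruhatLE u (π ρ)) :
    ∃ κ, κ <+ ρ ∧ π κ = u := by
  induction h with
  | refl => exact ⟨ρ, Sublist.refl ρ, rfl⟩
  | tail _ hstep ih =>
    obtain ⟨κ, hκ, rfl⟩ := ih
    obtain ⟨t, ht, rfl⟩ := hstep
    obtain ⟨j, -, hj⟩ := cs.exists_mul_eq_wordProd_eraseIdx ht
    exact ⟨κ.eraseIdx j, (eraseIdx_sublist κ j).trans hκ, hj.symm⟩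

variable (cs) in
theorem finite_setOf_bruhatLE (w : W) : {u | cs.BruhatLE u w}.Finite := by
  obtain ⟨ρ, rfl⟩ := cs.wordProd_surjective w
  refine ((ρ.sublists.finite_toSet).image cs.wordProd).subset fun u hu ↦ ?_
  obtain ⟨κ, hκ, rfl⟩ := BruhatLE.exists_sublist hu
  exact ⟨κ, mem_sublists.mpr hκ, rfl⟩

theorem mul_reflection_mul_simple_bruhatLE {x t : W} {i : B}
    (hsub : ∀ σ κ : List B, cs.IsReduced σ → σ.length < ℓ x → κ <+ σ → cs.BruhatLE (π κ) (π σ))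
    (ht : cs.IsRightInversion x t) (hi : cs.IsRightDescent x i) :
    cs.BruhatLE (x * t * s i) x := by
  obtain ⟨σ, hσ, hxσ⟩ := cs.exists_isReduced (x * s i)
  have hx : x = π (σ ++ [i]) := by
    rw [wordProd_append, ← hxσ, wordProd_singleton, simple_mul_simple_cancel_right]
  rw [hx] at ht
  obtain ⟨j, hj, hxt⟩ := cs.exists_mul_eq_wordProd_eraseIdx ht
  rw [← hx] at hxt
  rcases Nat.lt_succ_iff_lt_or_eq.mp (by simpa using hj) with hj | rfl
  · rw [hxt, eraseIdx_append_of_lt_length hj, wordProd_append, wordProd_singleton,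
      simple_mul_simple_cancel_right]
    refine (hsub σ _ hσ ?_ (eraseIdx_sublist σ j)).trans ?_
    · rw [← hσ.eq, ← hxσ]
      exact hi
    · rw [← hxσ]
      exact ((cs.isRightInversion_simple_iff_isRightDescent x i).mpr hi).bruhatLE_mul
  · rw [hxt, eraseIdx_append_of_length_le le_rfl, Nat.sub_self, eraseIdx_cons_zero, append_nil,
      ← hxσ, simple_mul_simple_cancel_right]
    exact .refl x

theorem BruhatLE.length_le {u w : W} (h : cs.BruhatLE u w) : ℓ u ≤ ℓ w := by
  induction h with
  | refl => exact le_rfl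
  | tail _ hstep ih =>
    obtain ⟨t, ht, rfl⟩ := hstep
    exact ht.2.le.trans ih

/-- The lifting property, assuming the subword property (`bruhatLE_wordProd_of_sublist`) in
lengths below `ℓ w`; the two are proved together by induction on length. -/
theorem BruhatLE.mul_simple_of_forall_sublist {u w : W} {i : B}
    (hsub : ∀ σ κ : List B, cs.IsReduced σ → σ.length < ℓ w → κ <+ σ → cs.BruhatLE (π κ) (π σ))
    (hu : cs.BruhatLE u w) (hi : cs.IsRightDescent w i) : cs.BruhatLE (u * s i) w := by
  induction hu with
  | refl => exact ((cs.isRightInversion_simple_iff_isRightDescent w i).mpr hi).bruhatLE_mul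
  | @tail x _ hxw hstep ih =>
    obtain ⟨t, ht, rfl⟩ := hstep
    by_cases hx : cs.IsRightDescent x i
    · exact (mul_reflection_mul_simple_bruhatLE
        (fun σ κ hσ hlen ↦ hsub σ κ hσ (hlen.trans_le (BruhatLE.length_le hxw))) ht hx).trans hxw
    · have hmul : x * s i * (s i * t * s i) = x * t * s i := by
        simp [mul_assoc, simple_mul_simple_cancel_left]
      have hconj : cs.IsRightInversion (x * s i) (s i * t * s i) := by
        refine ⟨by simpa using ht.1.conj (s i), ?_⟩
        rw [hmul]
        rw [not_isRightDescent_iff] at hx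
        have := ht.2
        have := cs.length_mul_simple (x * t) i
        omega
      rw [← hmul]
      exact hconj.bruhatLE_mul.trans ih

theorem bruhatLE_wordProd_of_sublist {ρ κ : List B} (hρ : cs.IsReduced ρ) (hκ : κ <+ ρ) :
    cs.BruhatLE (π κ) (π ρ) := by
  induction hlen : ρ.length using Nat.strong_induction_on generalizing ρ κ with
  | _ n ih =>
  obtain rfl | ⟨ρ, k, rfl⟩ := eq_nil_or_concat' ρ
  · rw [sublist_nil.mp hκ]
    exact .refl _
  have hρ₀ : cs.IsReduced ρ := by simpa using hρ.take ρ.length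
  have hρlen : ρ.length < n := by simp [← hlen]
  have hk : cs.IsRightDescent (π (ρ ++ [k])) k := by
    rw [IsRightDescent, wordProd_append, wordProd_singleton, simple_mul_simple_cancel_right,
      ← wordProd_singleton, ← wordProd_append, hρ.eq, hρ₀.eq]
    simp
  have hstep : cs.BruhatLE (π ρ) (π (ρ ++ [k])) := by
    simpa [wordProd_append] using
      ((cs.isRightInversion_simple_iff_isRightDescent _ k).mpr hk).bruhatLE_mul
  obtain ⟨κ₀, κ', rfl, hκ₀, hκ'⟩ := sublist_append_iff.mp hκ
  rcases sublist_singleton.mp hκ' with rfl | rfl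
  · rw [append_nil]
    exact (ih _ hρlen hρ₀ hκ₀ rfl).trans hstep
  · rw [wordProd_append, wordProd_singleton]
    refine ((ih _ hρlen hρ₀ hκ₀ rfl).trans hstep).mul_simple_of_forall_sublist
      (fun σ τ hσ hσlen hτ ↦ ih _ ?_ hσ hτ rfl) hk
    rwa [hρ.eq, hlen] at hσlen

theorem BruhatLE.mul_simple {u w : W} {i : B} (hu : cs.BruhatLE u w)
    (hi : cs.IsRightDescent w i) : cs.BruhatLE (u * s i) w :=
  hu.mul_simple_of_forall_sublist (fun _ _ hσ _ hκ ↦ bruhatLE_wordProd_of_sublist hσ hκ) hi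

variable (cs) in
theorem one_bruhatLE (w : W) : cs.BruhatLE 1 w := by
  obtain ⟨ρ, hρ, rfl⟩ := cs.exists_isReduced w
  simpa using bruhatLE_wordProd_of_sublist hρ (nil_sublist ρ)

end Bruhat

theorem finite_closure_simple_image_of_isRightDescent {w : W} {J : Set B}
    (hJ : ∀ i ∈ J, cs.IsRightDescent w i) : (Subgroup.closure (cs.simple '' J) : Set W).Finite := by
  refine (cs.finite_setOf_bruhatLE w).subset fun v hv ↦ ?_
  induction hv using Subgroup.closure_induction_right with
  | one => exact cs.one_bruhatLE w
  | mul_right x _ _ hy hx =>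
    obtain ⟨i, hi, rfl⟩ := hy
    exact hx.mul_simple (hJ i hi)
  | mul_inv_cancel x _ _ hy hx =>
    obtain ⟨i, hi, rfl⟩ := hy
    rw [inv_simple]
    exact hx.mul_simple (hJ i hi)

end CoxeterSystem

/-- For any `w`, the set `I^-(w) = {i : ℓ(w sᵢ) = ℓ(w) - 1}` is spherical: the standard
parabolic subgroup it generates is finite. -/
theorem descent_set_spherical {B W : Type*} [Group W] {M : CoxeterMatrix B}
    (cs : CoxeterSystem M W) (w : W) :
    Set.Finite ((Subgroup.closure
      (cs.simple '' {i : B | cs.length (w * cs.simple i) + 1 = cs.length w}) :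
        Subgroup W) : Set W) :=
  cs.finite_closure_simple_image_of_isRightDescent fun _ hi ↦ cs.isRightDescent_iff.mpr hi
end

section
/- Let Γ be a spherical Coxeter matrix (W_Γ is finite) and let {α, β} be a 2-partition of the index set I such that both the alternating product prod_{m}(r_α, r_β) and prod_{m}(r_β, r_α) of m = |r_α r_β| factors satisfy ℓ(prod_m(r_α,r_β)) = Σ_m(ℓ(r_α),ℓ(r_β)) and similarly with α, β swapped. Then prod_m(r_α, r_β) = prod_m(r_β, r_α) = r_I, the longest element of W_Γ. -/
/-- Alternating product `xyxy⋯` of `n` factors. -/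
def altProd {W : Type*} [Monoid W] (x y : W) : ℕ → W
  | 0 => 1
  | n + 1 => x * altProd y x n

/-- Alternating sum `a + b + a + ⋯` of `n` terms. -/
def altSum (a b : ℕ) : ℕ → ℕ
  | 0 => 0
  | n + 1 => a + altSum b a n

/-- `x` is the longest element of the standard parabolic subgroup generated by `α`. -/
def IsLongestOf {B W : Type*} [Group W] {M : CoxeterMatrix B} (cs : CoxeterSystem M W)
    (α : Set B) (x : W) : Prop :=
  x ∈ Subgroup.closure (cs.simple '' α) ∧
  (∀ u ∈ Subgroup.closure (cs.simple '' α), cs.length u ≤ cs.length x) ∧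
  (∀ u ∈ Subgroup.closure (cs.simple '' α), cs.length u = cs.length x → u = x)

/-!
For involutions `x, y` one has `(xyx⋯) (yxy⋯)⁻¹ = (xy)ᵐ` (`m` factors each), so the two
alternating products coincide when `m = |r_α r_β|`. Every `i ∈ α` is a left descent of `r_α`, and
length additivity makes it a left descent of `∏_m(r_α, r_β)`; likewise every `i ∈ β` is a left
descent of `∏_m(r_β, r_α)`. The common value therefore has all simple reflections as left descents,
and only the longest element has.

This last fact needs the exchange property, which comes from the reflection cocycle: `W` acts
on `W × ℤ/2` by `sᵢ • (w, ε) = (sᵢ w sᵢ, ε + [w = sᵢ])`, and the second component of `u • (t, 0)`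
is `1` exactly when the reflection `t` is a right inversion of `u`. As every reflection is a right
inversion of `r_I`, this gives `ℓ (r_I v) + ℓ v = ℓ r_I` for all `v`, which singles out `r_I`.
-/

section AltProd

variable {G : Type*} [Group G] {x y : G}

theorem altProd_mul_inv_altProd (hx : x⁻¹ = x) (hy : y⁻¹ = y) (n : ℕ) :
    altProd x y n * (altProd y x n)⁻¹ = (x * y) ^ n := by
  induction n generalizing x y with
  | zero => simp [altProd]
  | succ n ih =>
    calc altProd x y (n + 1) * (altProd y x (n + 1))⁻¹
        = x * (altProd y x n * (altProd x y n)⁻¹) * y⁻¹ := by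
          simp only [altProd, mul_inv_rev, mul_assoc]
      _ = (x * y) ^ (n + 1) := by rw [ih hy hx, hy, ← mul_pow_mul, pow_succ, mul_assoc]

theorem altProd_eq_altProd_of_pow_eq_one (hx : x⁻¹ = x) (hy : y⁻¹ = y) {n : ℕ}
    (h : (x * y) ^ n = 1) : altProd x y n = altProd y x n :=
  mul_inv_eq_one.mp (by rw [altProd_mul_inv_altProd hx hy, h])

end AltProd

section TwistedConj

open Finset

variable {G : Type*} [Group G]

theorem conj_eq_iff_eq_conj {u w z : G} : u * w * u⁻¹ = z ↔ w = u⁻¹ * z * u := by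
  constructor <;> rintro rfl <;> group

variable [DecidableEq G]

def twistedConj (s : G) : Equiv.Perm (G × ZMod 2) where
  toFun p := (s * p.1 * s⁻¹, p.2 + if p.1 = s then 1 else 0)
  invFun p := (s⁻¹ * p.1 * s, p.2 + if p.1 = s then 1 else 0)
  left_inv := by
    rintro ⟨w, e⟩
    simp [mul_assoc, mul_inv_eq_iff_eq_mul, add_assoc, CharTwo.add_self_eq_zero]
  right_inv := by
    rintro ⟨w, e⟩
    simp [mul_assoc, inv_mul_eq_iff_eq_mul, add_assoc, CharTwo.add_self_eq_zero]

theorem twistedConj_apply (s w : G) (e : ZMod 2) :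
    twistedConj s (w, e) = (s * w * s⁻¹, e + if w = s then 1 else 0) := rfl

variable {a b : G}

theorem twistedConj_mul_twistedConj_apply (hb : b⁻¹ = b) (w : G) (e : ZMod 2) :
    (twistedConj a * twistedConj b) (w, e) =
      (a * b * w * (a * b)⁻¹,
        e + ((if w = b then 1 else 0) + if w = b * a * b then 1 else 0)) := by
  have hcond : b * w * b⁻¹ = a ↔ w = b * a * b := by rw [conj_eq_iff_eq_conj, hb]
  simp only [Equiv.Perm.mul_apply, twistedConj_apply, hcond]
  refine Prod.ext ?_ ?_
  · group
  · exact add_assoc _ _ _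

theorem twistedConj_mul_pow_apply (ha : a⁻¹ = a) (hb : b⁻¹ = b) (k : ℕ) (w : G) (e : ZMod 2) :
    ((twistedConj a * twistedConj b) ^ k) (w, e) =
      ((a * b) ^ k * w * ((a * b) ^ k)⁻¹,
        e + ∑ j ∈ range (2 * k), if w = (b * a) ^ j * b then 1 else 0) := by
  induction k generalizing w e with
  | zero => simp
  | succ k ih =>
    have hshift (j : ℕ) :
        a * b * w * (a * b)⁻¹ = (b * a) ^ j * b ↔ w = (b * a) ^ (j + 2) * b := by
      rw [conj_eq_iff_eq_conj, mul_inv_rev, ha, hb, pow_succ' _ (j + 1), pow_succ]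
      simp only [mul_assoc]
    rw [pow_succ, Equiv.Perm.mul_apply, twistedConj_mul_twistedConj_apply hb, ih]
    simp only [hshift, Nat.mul_succ, sum_range_succ' _ (2 * k + 1), sum_range_succ' _ (2 * k)]
    refine Prod.ext ?_ ?_
    · rw [pow_succ]; group
    · simp only [zero_add, pow_zero, one_mul, pow_one, Nat.add_assoc, Nat.reduceAdd]
      ring

theorem twistedConj_mul_pow_eq_one (ha : a⁻¹ = a) (hb : b⁻¹ = b) {m : ℕ}
    (h : (a * b) ^ m = 1) : (twistedConj a * twistedConj b) ^ m = 1 := by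
  -- the terms `j` and `m + j` of the sum coincide, so every `w` is counted an even number of times
  have hba : (b * a) ^ m = 1 := by rw [← ha, ← hb, ← mul_inv_rev, inv_pow, h, inv_one]
  ext ⟨w, e⟩ : 1
  rw [twistedConj_mul_pow_apply ha hb, two_mul, sum_range_add, h]
  simp only [pow_add, hba, one_mul, mul_one, inv_one, Equiv.Perm.one_apply, ← two_mul]
  simp [CharTwo.two_eq_zero]

end TwistedConj

namespace CoxeterSystem

variable {B W : Type*} [Group W] {M : CoxeterMatrix B} (cs : CoxeterSystem M W)

open scoped Classical

noncomputable def twistedConjRep : W →* Equiv.Perm (W × ZMod 2) :=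
  cs.lift ⟨fun i => twistedConj (cs.simple i), fun i i' => twistedConj_mul_pow_eq_one
    (cs.inv_simple i) (cs.inv_simple i') (cs.simple_mul_simple_pow i i')⟩

/-- The parity of the number of occurrences of `t` in the right inversion sequence of any word
for `u`. -/
noncomputable def inversionParity (u t : W) : ZMod 2 := (cs.twistedConjRep u (t, 0)).2

theorem twistedConjRep_simple (i : B) :
    cs.twistedConjRep (cs.simple i) = twistedConj (cs.simple i) :=
  cs.lift_apply_simple _ i

theorem twistedConjRep_apply (u w : W) (e : ZMod 2) :
    cs.twistedConjRep u (w, e) = (u * w * u⁻¹, e + cs.inversionParity u w) := by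
  induction u using cs.simple_induction_left generalizing w e with
  | one => simp [inversionParity]
  | mul_simple_left u i ih =>
    rw [inversionParity, map_mul, Equiv.Perm.mul_apply, Equiv.Perm.mul_apply, ih, ih,
      twistedConjRep_simple, twistedConj_apply, twistedConj_apply]
    refine Prod.ext ?_ ?_
    · group
    · ring

theorem inversionParity_mul (u v t : W) :
    cs.inversionParity (u * v) t =
      cs.inversionParity v t + cs.inversionParity u (v * t * v⁻¹) := by
  rw [inversionParity, map_mul, Equiv.Perm.mul_apply, twistedConjRep_apply, twistedConjRep_apply]
  simp only [zero_add]

theorem inversionParity_one (t : W) : cs.inversionParity 1 t = 0 := by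
  simp [inversionParity]

theorem inversionParity_simple (i : B) (t : W) :
    cs.inversionParity (cs.simple i) t = if t = cs.simple i then 1 else 0 := by
  rw [inversionParity, twistedConjRep_simple, twistedConj_apply, zero_add]

theorem inversionParity_self {t : W} (ht : cs.IsReflection t) : cs.inversionParity t t = 1 := by
  obtain ⟨u, i, rfl⟩ := ht
  have hinv := cs.inversionParity_mul u⁻¹ u (cs.simple i)
  rw [inv_mul_cancel, inversionParity_one] at hinv
  rw [inversionParity_mul, inversionParity_mul, inversionParity_simple, if_pos (by group),
    show u⁻¹ * (u * cs.simple i * u⁻¹) * u⁻¹⁻¹ = cs.simple i by group,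
    show cs.simple i * cs.simple i * (cs.simple i)⁻¹ = cs.simple i by group]
  calc _ = 1 + (cs.inversionParity u (cs.simple i) +
        cs.inversionParity u⁻¹ (u * cs.simple i * u⁻¹)) := by ring
    _ = 1 := by rw [← hinv, add_zero]

theorem length_mul_lt_of_inversionParity_eq_one {x t : W} (h : cs.inversionParity x t = 1) :
    cs.length (x * t) < cs.length x := by
  induction hx : cs.length x using Nat.strong_induction_on generalizing x t with
  | _ n ih =>
    subst hx
    rcases eq_or_ne x 1 with rfl | hne
    · rw [inversionParity_one] at h
      exact absurd h zero_ne_one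
    obtain ⟨i, hi⟩ := cs.exists_rightDescent_of_ne_one hne
    have hi' := cs.isRightDescent_iff.mp hi
    set x' := x * cs.simple i
    have hx : x = x' * cs.simple i := (cs.simple_mul_simple_cancel_right i).symm
    rw [hx, inversionParity_mul, inversionParity_simple] at h
    by_cases hts : t = cs.simple i
    · rw [hts]; exact hi
    rw [if_neg hts, zero_add] at h
    have hlt := ih _ (by omega) h rfl
    calc cs.length (x * t)
        = cs.length (x' * (cs.simple i * t * (cs.simple i)⁻¹) * cs.simple i) := by
          rw [hx]; group
      _ ≤ cs.length (x' * (cs.simple i * t * (cs.simple i)⁻¹)) + 1 := by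
          simpa using cs.length_mul_le _ (cs.simple i)
      _ < cs.length x := by omega

theorem inversionParity_eq_one_iff {x t : W} (ht : cs.IsReflection t) :
    cs.inversionParity x t = 1 ↔ cs.IsRightInversion x t := by
  refine ⟨fun h => ⟨ht, cs.length_mul_lt_of_inversionParity_eq_one h⟩, fun ⟨_, hlt⟩ => ?_⟩
  by_contra hne
  have h0 : cs.inversionParity x t = 0 := (by decide : ∀ z : ZMod 2, z ≠ 1 → z = 0) _ hne
  have h1 : cs.inversionParity (x * t) t = 1 := by
    rw [inversionParity_mul, cs.inversionParity_self ht, ht.mul_self, one_mul, ht.inv, h0,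
      add_zero]
  have := cs.length_mul_lt_of_inversionParity_eq_one h1
  rw [mul_assoc, ht.mul_self, mul_one] at this
  omega

theorem isRightDescent_mul_of_isRightInversion {x v : W} {i : B}
    (hv : ¬cs.IsRightDescent v i) (hx : cs.IsRightInversion x (v * cs.simple i * v⁻¹)) :
    cs.IsRightDescent (x * v) i := by
  have hv0 : cs.inversionParity v (cs.simple i) = 0 := by
    by_contra hne
    exact hv (cs.length_mul_lt_of_inversionParity_eq_one
      ((by decide : ∀ z : ZMod 2, z ≠ 0 → z = 1) _ hne))
  apply cs.length_mul_lt_of_inversionParity_eq_one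
  rw [inversionParity_mul, hv0, zero_add, cs.inversionParity_eq_one_iff hx.1]
  exact hx

theorem length_mul_add_length_of_forall_isRightInversion {x : W}
    (hx : ∀ t, cs.IsReflection t → cs.IsRightInversion x t) (v : W) :
    cs.length (x * v) + cs.length v = cs.length x := by
  induction hv : cs.length v using Nat.strong_induction_on generalizing v with
  | _ n ih =>
    subst hv
    rcases eq_or_ne v 1 with rfl | hne
    · simp
    obtain ⟨i, hi⟩ := cs.exists_rightDescent_of_ne_one hne
    have hi' := cs.isRightDescent_iff.mp hi
    have hv' : ¬cs.IsRightDescent (v * cs.simple i) i := by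
      rw [← cs.isRightDescent_iff_not_isRightDescent_mul]; exact hi
    have hdesc := cs.isRightDescent_iff.mp
      (cs.isRightDescent_mul_of_isRightInversion hv' (hx _ ((cs.isReflection_simple i).conj _)))
    have hih := ih _ (by omega) (v * cs.simple i) rfl
    simp only [mul_assoc, cs.simple_mul_simple_self, mul_one] at hdesc
    omega

theorem eq_of_forall_isRightDescent {x w : W} (hmax : ∀ u, cs.length u ≤ cs.length x)
    (hw : ∀ i, cs.IsRightDescent w i) : w = x := by
  have hx (t : W) (ht : cs.IsReflection t) : cs.IsRightInversion x t :=
    ⟨ht, (hmax _).lt_of_ne (ht.length_mul_left_ne x)⟩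
  by_contra hne
  obtain ⟨i, hi⟩ := cs.exists_rightDescent_of_ne_one (w := x⁻¹ * w) fun h =>
    hne (inv_mul_eq_one.mp h).symm
  have hlen := cs.length_mul_add_length_of_forall_isRightInversion hx (x⁻¹ * w)
  have hlen' := cs.length_mul_add_length_of_forall_isRightInversion hx (x⁻¹ * w * cs.simple i)
  rw [mul_inv_cancel_left] at hlen
  rw [← mul_assoc, ← mul_assoc, mul_inv_cancel, one_mul] at hlen'
  have hi' := cs.isRightDescent_iff.mp hi
  have hwi : cs.length (w * cs.simple i) < cs.length w := hw i
  omega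

theorem length_altProd_le (x y : W) (n : ℕ) :
    cs.length (altProd x y n) ≤ altSum (cs.length x) (cs.length y) n := by
  induction n generalizing x y with
  | zero => simp [altProd, altSum]
  | succ n ih =>
    exact (cs.length_mul_le _ _).trans (Nat.add_le_add_left (ih y x) _)

theorem isLeftDescent_altProd {x y : W} {i : B} {n : ℕ} (hi : cs.IsLeftDescent x i) (hn : n ≠ 0)
    (h : cs.length (altProd x y n) = altSum (cs.length x) (cs.length y) n) :
    cs.IsLeftDescent (altProd x y n) i := by
  obtain ⟨n, rfl⟩ := Nat.exists_eq_succ_of_ne_zero hn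
  unfold IsLeftDescent at hi ⊢
  calc cs.length (cs.simple i * altProd x y (n + 1))
      ≤ cs.length (cs.simple i * x) + cs.length (altProd y x n) := by
        rw [altProd, ← mul_assoc]; exact cs.length_mul_le _ _
    _ < cs.length x + altSum (cs.length y) (cs.length x) n := by
        have := cs.length_altProd_le y x n; omega
    _ = cs.length (altProd x y (n + 1)) := h.symm

end CoxeterSystem

section IsLongestOf

variable {B W : Type*} [Group W] {M : CoxeterMatrix B} {cs : CoxeterSystem M W} {α : Set B}
  {x : W}

theorem IsLongestOf.inv_eq (h : IsLongestOf cs α x) : x⁻¹ = x :=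
  h.2.2 x⁻¹ (inv_mem h.1) (cs.length_inv x)

theorem IsLongestOf.isLeftDescent (h : IsLongestOf cs α x) {i : B} (hi : i ∈ α) :
    cs.IsLeftDescent x i :=
  (h.2.1 _ (mul_mem (Subgroup.subset_closure (Set.mem_image_of_mem _ hi)) h.1)).lt_of_ne
    (cs.length_simple_mul_ne x i)

theorem IsLongestOf.eq_of_forall_isLeftDescent (h : IsLongestOf cs Set.univ x) {w : W}
    (hw : ∀ i, cs.IsLeftDescent w i) : w = x := by
  have hmax (u : W) : cs.length u ≤ cs.length x :=
    h.2.1 u (by rw [Set.image_univ, cs.subgroup_closure_range_simple]; trivial)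
  have := cs.eq_of_forall_isRightDescent hmax fun i => cs.isRightDescent_inv_iff.mpr (hw i)
  rw [← h.inv_eq, ← this, inv_inv]

end IsLongestOf

theorem altProd_eq_longest_of_compatible_general {B W : Type*} [Group W] {M : CoxeterMatrix B}
    (cs : CoxeterSystem M W) [Finite W]
    (α β : Set B) (hunion : α ∪ β = Set.univ)
    (rα rβ rI : W) (hrα : IsLongestOf cs α rα) (hrβ : IsLongestOf cs β rβ)
    (hrI : IsLongestOf cs Set.univ rI)
    (h1 : cs.length (altProd rα rβ (orderOf (rα * rβ))) =
      altSum (cs.length rα) (cs.length rβ) (orderOf (rα * rβ)))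
    (h2 : cs.length (altProd rβ rα (orderOf (rα * rβ))) =
      altSum (cs.length rβ) (cs.length rα) (orderOf (rα * rβ))) :
    altProd rα rβ (orderOf (rα * rβ)) = rI ∧
      altProd rβ rα (orderOf (rα * rβ)) = rI := by
  have hm : orderOf (rα * rβ) ≠ 0 := (orderOf_pos _).ne'
  have hswap : altProd rα rβ (orderOf (rα * rβ)) = altProd rβ rα (orderOf (rα * rβ)) :=
    altProd_eq_altProd_of_pow_eq_one hrα.inv_eq hrβ.inv_eq (pow_orderOf_eq_one _)
  have hdesc (i : B) : cs.IsLeftDescent (altProd rα rβ (orderOf (rα * rβ))) i := by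
    rcases (hunion ▸ Set.mem_univ i : i ∈ α ∪ β) with hi | hi
    · exact cs.isLeftDescent_altProd (hrα.isLeftDescent hi) hm h1
    · exact hswap ▸ cs.isLeftDescent_altProd (hrβ.isLeftDescent hi) hm h2
  have hp := hrI.eq_of_forall_isLeftDescent hdesc
  exact ⟨hp, hswap ▸ hp⟩

/-- In a finite Coxeter group, if both alternating words of `m = |r_α r_β|` letters in a
2-partition `{α, β}` are compatible, then `∏_m(r_α,r_β) = ∏_m(r_β,r_α) = r_I`. -/
theorem altProd_eq_longest_of_compatible {B W : Type*} [Group W] {M : CoxeterMatrix B}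
    (cs : CoxeterSystem M W) [Finite W]
    (α β : Set B) (hunion : α ∪ β = Set.univ) (hdisj : Disjoint α β)
    (hα : α.Nonempty) (hβ : β.Nonempty)
    (rα rβ rI : W) (hrα : IsLongestOf cs α rα) (hrβ : IsLongestOf cs β rβ)
    (hrI : IsLongestOf cs Set.univ rI)
    (h1 : cs.length (altProd rα rβ (orderOf (rα * rβ))) =
      altSum (cs.length rα) (cs.length rβ) (orderOf (rα * rβ)))
    (h2 : cs.length (altProd rβ rα (orderOf (rα * rβ))) =
      altSum (cs.length rβ) (cs.length rα) (orderOf (rα * rβ))) :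
    altProd rα rβ (orderOf (rα * rβ)) = rI ∧
      altProd rβ rα (orderOf (rα * rβ)) = rI :=
  altProd_eq_longest_of_compatible_general cs α β hunion rα rβ rI hrα hrβ hrI h1 h2
end

section
/- Let (W,S) be a Coxeter system indexed by I, {α,β} a spherical 2-partition of I, and suppose that for every integer 0 ≤ n < |r_α r_β| + 1 the alternating words prod_n(α,β) and prod_n(β,α) are compatible (i.e. ℓ(prod_n(r_α,r_β)) = Σ_n(ℓ(r_α),ℓ(r_β)) and similarly with roles swapped). Then for every element w of the subgroup ⟨r_α, r_β⟩ and every γ ∈ {α,β}, either γ ⊆ I^+(w) or γ ⊆ I^-(w). -/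
/-- `α` is spherical: the standard parabolic subgroup it generates is finite. -/
def IsSpherical {B W : Type*} [Group W] {M : CoxeterMatrix B} (cs : CoxeterSystem M W)
    (α : Set B) : Prop :=
  Set.Finite ((Subgroup.closure (cs.simple '' α) : Subgroup W) : Set W)

section AuxGroup

variable {W : Type*}

lemma altProd_succ_right [Monoid W] :
    ∀ (n : ℕ) (x y : W), altProd x y (n + 1) = altProd x y n * (if Even n then x else y)
  | 0, x, y => by simp [altProd]
  | n + 1, x, y => by
    rw [show altProd x y (n + 2) = x * altProd y x (n + 1) from rfl,
      altProd_succ_right n y x, show altProd x y (n + 1) = x * altProd y x n from rfl,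
      mul_assoc]
    by_cases h : Even n <;> simp [h, Nat.even_add_one]

lemma altSum_succ_right :
    ∀ (n : ℕ) (a b : ℕ), altSum a b (n + 1) = altSum a b n + (if Even n then a else b)
  | 0, a, b => by simp [altSum]
  | n + 1, a, b => by
    rw [show altSum a b (n + 2) = a + altSum b a (n + 1) from rfl,
      altSum_succ_right n b a, show altSum a b (n + 1) = a + altSum b a n from rfl,
      ← Nat.add_assoc]
    by_cases h : Even n <;> simp [h, Nat.even_add_one]

lemma altProd_two_mul [Monoid W] :
    ∀ (k : ℕ) (x y : W), altProd x y (2 * k) = (x * y) ^ k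
  | 0, x, y => by simp [altProd]
  | k + 1, x, y => by
    rw [show 2 * (k + 1) = (2 * k) + 1 + 1 from by ring,
      show altProd x y (2 * k + 1 + 1) = x * altProd y x (2 * k + 1) from rfl,
      show altProd y x (2 * k + 1) = y * altProd x y (2 * k) from rfl,
      altProd_two_mul k x y, pow_succ', mul_assoc]

lemma altProd_odd [Monoid W] (k : ℕ) (x y : W) :
    altProd x y (2 * k + 1) = (x * y) ^ k * x := by
  rw [altProd_succ_right, altProd_two_mul]
  simp

variable [Group W] {x y : W}

lemma swap_inv (hx : x * x = 1) (hy : y * y = 1) : (x * y)⁻¹ = y * x := by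
  rw [mul_inv_rev, inv_eq_of_mul_eq_one_left hx, inv_eq_of_mul_eq_one_left hy]

lemma orderOf_swap (hx : x * x = 1) (hy : y * y = 1) : orderOf (y * x) = orderOf (x * y) := by
  rw [← swap_inv hx hy, orderOf_inv]

/-- At the top of the dihedral group, the two alternating words agree. -/
lemma altProd_top (hx : x * x = 1) (hy : y * y = 1) {m : ℕ} (hm : (x * y) ^ m = 1) :
    altProd x y m = altProd y x m := by
  have hyx : (y * x) ^ m = 1 := by
    rw [← swap_inv hx hy, inv_pow, hm, inv_one]
  rcases Nat.even_or_odd m with ⟨k, hk⟩ | ⟨k, hk⟩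
  · subst hk
    rw [show k + k = 2 * k from by ring] at *
    rw [altProd_two_mul, altProd_two_mul, ← swap_inv hx hy, inv_pow]
    rw [two_mul, pow_add] at hm
    exact (inv_eq_of_mul_eq_one_left hm).symm
  · subst hk
    rw [altProd_odd, altProd_odd, ← swap_inv hx hy, inv_pow]
    have hAA : (x * y) ^ k * (x * y) ^ k = y * x := by
      have h1 : (x * y) ^ (2 * k) * (x * y) = 1 := by rw [← pow_succ]; exact hm
      have h2 : (x * y) ^ (2 * k) = (x * y)⁻¹ := eq_inv_of_mul_eq_one_left h1
      rw [← pow_add, ← two_mul, h2, swap_inv hx hy]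
    have key : (x * y) ^ k * ((x * y) ^ k * x) = y := by
      rw [← mul_assoc, hAA, mul_assoc, hx, mul_one]
    rw [eq_comm, inv_mul_eq_iff_eq_mul, key]

lemma altProd_inv (hx : x * x = 1) (hy : y * y = 1) (k : ℕ) :
    (altProd x y k)⁻¹ = altProd x y k ∨ (altProd x y k)⁻¹ = altProd y x k := by
  have hxi : x⁻¹ = x := inv_eq_of_mul_eq_one_left hx
  rcases Nat.even_or_odd k with ⟨c, hc⟩ | ⟨c, hc⟩
  · right
    rw [hc, show c + c = 2 * c from by ring, altProd_two_mul, altProd_two_mul, ← inv_pow,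
      swap_inv hx hy]
  · left
    rw [hc, altProd_odd, mul_inv_rev, hxi, ← inv_pow, swap_inv hx hy]
    exact (show SemiconjBy x (y * x) (x * y) from by
      unfold SemiconjBy; rw [mul_assoc]).pow_right c

/-- Right multiplication by `x` preserves the alternating normal form. -/
lemma step_right (hx : x * x = 1) (hy : y * y = 1) {w : W} {n : ℕ}
    (hn : orderOf (x * y) = 0 ∨ n ≤ orderOf (x * y))
    (hw : w = altProd x y n ∨ w = altProd y x n) :
    ∃ k : ℕ, (orderOf (x * y) = 0 ∨ k ≤ orderOf (x * y)) ∧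
      (w * x = altProd x y k ∨ w * x = altProd y x k) := by
  set m := orderOf (x * y) with hmdef
  clear_value m
  have hm1 : (x * y) ^ m = 1 := by rw [hmdef]; exact pow_orderOf_eq_one _
  rcases hw with rfl | rfl
  · rcases Nat.even_or_odd n with he | ho
    · -- next letter of altProd x y is x
      by_cases hr : m = 0 ∨ n + 1 ≤ m
      · exact ⟨n + 1, hr, Or.inl (by rw [altProd_succ_right, if_pos he])⟩
      · push_neg at hr
        obtain ⟨hm0, hlt⟩ := hr
        have hnm : n = m := by omega
        obtain ⟨j, hj⟩ : ∃ j, n = j + 1 := ⟨n - 1, by omega⟩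
        have hoddj : ¬ Even j := by
          rw [hj, Nat.even_add_one] at he; exact he
        refine ⟨j, Or.inr (by omega), Or.inr ?_⟩
        rw [hnm, altProd_top hx hy hm1, ← hnm, hj, altProd_succ_right, if_neg hoddj,
          mul_assoc, hx, mul_one]
    · -- last letter of altProd x y n is x
      obtain ⟨c, hc⟩ := ho
      obtain ⟨j, hj⟩ : ∃ j, n = j + 1 := ⟨n - 1, by omega⟩
      have hevenj : Even j := by
        have : ¬ Even n := Nat.not_even_iff_odd.mpr ⟨c, hc⟩
        rw [hj, Nat.even_add_one] at this; simpa using this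
      refine ⟨j, ?_, Or.inl ?_⟩
      · rcases hn with h | h
        · exact Or.inl h
        · exact Or.inr (by omega)
      · rw [hj, altProd_succ_right, if_pos hevenj, mul_assoc, hx, mul_one]
  · rcases Nat.even_or_odd n with he | ho
    · rcases Nat.eq_zero_or_pos n with rfl | hpos
      · refine ⟨1, ?_, Or.inl ?_⟩
        · rcases Nat.eq_zero_or_pos m with h | h
          · exact Or.inl h
          · exact Or.inr h
        · simp [altProd]
      · -- last letter of altProd y x n (n even, positive) is x
        obtain ⟨j, hj⟩ : ∃ j, n = j + 1 := ⟨n - 1, by omega⟩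
        have hoddj : ¬ Even j := by
          rw [hj, Nat.even_add_one] at he; exact he
        refine ⟨j, ?_, Or.inr ?_⟩
        · rcases hn with h | h
          · exact Or.inl h
          · exact Or.inr (by omega)
        · rw [hj, altProd_succ_right, if_neg hoddj, mul_assoc, hx, mul_one]
    · -- next letter of altProd y x (n odd) is x
      by_cases hr : m = 0 ∨ n + 1 ≤ m
      · exact ⟨n + 1, hr,
          Or.inr (by rw [altProd_succ_right, if_neg (Nat.not_even_iff_odd.mpr ho)])⟩
      · push_neg at hr
        obtain ⟨hm0, hlt⟩ := hr
        have hnm : n = m := by omega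
        obtain ⟨j, hj⟩ : ∃ j, n = j + 1 := ⟨n - 1, by omega⟩
        have hevenj : Even j := by
          have := Nat.not_even_iff_odd.mpr ho
          rw [hj, Nat.even_add_one] at this; simpa using this
        refine ⟨j, Or.inr (by omega), Or.inl ?_⟩
        have hyx1 : (y * x) ^ n = 1 := by
          rw [hnm, hmdef, ← orderOf_swap hx hy]; exact pow_orderOf_eq_one _
        rw [altProd_top hy hx hyx1, hj, altProd_succ_right, if_pos hevenj,
          mul_assoc, hx, mul_one]

/-- Every element of `⟨x, y⟩` (with `x`, `y` involutions) has an alternating normal form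
bounded by the order of `x * y`. -/
lemma mem_closure_pair (hx : x * x = 1) (hy : y * y = 1) (w : W)
    (hw : w ∈ Subgroup.closure ({x, y} : Set W)) :
    ∃ n : ℕ, (orderOf (x * y) = 0 ∨ n ≤ orderOf (x * y)) ∧
      (w = altProd x y n ∨ w = altProd y x n) := by
  set m := orderOf (x * y) with hmdef
  set P : W → Prop := fun w =>
    ∃ n : ℕ, (m = 0 ∨ n ≤ m) ∧ (w = altProd x y n ∨ w = altProd y x n) with hP
  have hstepx : ∀ w, P w → P (w * x) := by
    rintro w ⟨n, hn, hwn⟩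
    exact step_right hx hy hn hwn
  have hstepy : ∀ w, P w → P (w * y) := by
    rintro w ⟨n, hn, hwn⟩
    have hn' : orderOf (y * x) = 0 ∨ n ≤ orderOf (y * x) := by
      rwa [orderOf_swap hx hy]
    obtain ⟨k, hk, hwk⟩ := step_right hy hx hn' hwn.symm
    refine ⟨k, by rwa [orderOf_swap hx hy] at hk, hwk.symm⟩
  have hmul : ∀ (k : ℕ) (x' y' : W), (∀ w, P w → P (w * x')) → (∀ w, P w → P (w * y')) →
      ∀ a, P a → P (a * altProd x' y' k) := by
    intro k
    induction k with
    | zero => intro x' y' _ _ a ha; simpa [altProd] using ha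
    | succ k ih =>
      intro x' y' hx' hy' a ha
      rw [altProd_succ_right, ← mul_assoc]
      by_cases h : Even k
      · rw [if_pos h]; exact hx' _ (ih x' y' hx' hy' a ha)
      · rw [if_neg h]; exact hy' _ (ih x' y' hx' hy' a ha)
  have : P w := by
    refine Subgroup.closure_induction (fun z hz => ?_) ?_ (fun a b _ _ ha hb => ?_)
      (fun a _ ha => ?_) hw
    · rcases hz with rfl | hz
      · refine ⟨1, ?_, Or.inl (by simp [altProd])⟩
        rcases Nat.eq_zero_or_pos m with h | h
        · exact Or.inl h
        · exact Or.inr h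
      · rw [Set.mem_singleton_iff] at hz
        subst hz
        refine ⟨1, ?_, Or.inr (by simp [altProd])⟩
        rcases Nat.eq_zero_or_pos m with h | h
        · exact Or.inl h
        · exact Or.inr h
    · exact ⟨0, Or.inr (Nat.zero_le _), Or.inl rfl⟩
    · obtain ⟨k, hk, hbk⟩ := hb
      rcases hbk with rfl | rfl
      · exact hmul k x y hstepx hstepy a ha
      · exact hmul k y x hstepy hstepx a ha
    · obtain ⟨k, hk, hak⟩ := ha
      rcases hak with rfl | rfl
      · rcases altProd_inv hx hy k with h | h
        · exact ⟨k, hk, Or.inl h⟩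
        · exact ⟨k, hk, Or.inr h⟩
      · rcases altProd_inv hy hx k with h | h
        · exact ⟨k, hk, Or.inr h⟩
        · exact ⟨k, hk, Or.inl h⟩
  exact this

end AuxGroup

section Cox

variable {B W : Type*} [Group W] {M : CoxeterMatrix B} (cs : CoxeterSystem M W)

lemma longest_mul_self {A : Set B} {x : W} (h : IsLongestOf cs A x) : x * x = 1 := by
  have h1 : x⁻¹ ∈ Subgroup.closure (cs.simple '' A) := inv_mem h.1
  have h2 : x⁻¹ = x := h.2.2 x⁻¹ h1 (cs.length_inv x)
  calc x * x = x * x⁻¹ := by rw [h2]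
  _ = 1 := by group

lemma longest_mul_simple {A : Set B} {x : W} (h : IsLongestOf cs A x) {i : B} (hi : i ∈ A) :
    cs.length (x * cs.simple i) + 1 = cs.length x := by
  have hs : cs.simple i ∈ Subgroup.closure (cs.simple '' A) :=
    Subgroup.subset_closure ⟨i, hi, rfl⟩
  have hle : cs.length (x * cs.simple i) ≤ cs.length x := h.2.1 _ (mul_mem h.1 hs)
  rcases cs.length_mul_simple x i with hh | hh
  · omega
  · exact hh

lemma longest_simple_mul {A : Set B} {x : W} (h : IsLongestOf cs A x) {i : B} (hi : i ∈ A) :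
    cs.length (cs.simple i * x) + 1 = cs.length x := by
  have hs : cs.simple i ∈ Subgroup.closure (cs.simple '' A) :=
    Subgroup.subset_closure ⟨i, hi, rfl⟩
  have hle : cs.length (cs.simple i * x) ≤ cs.length x := h.2.1 _ (mul_mem hs h.1)
  rcases cs.length_simple_mul x i with hh | hh
  · omega
  · exact hh

lemma descent_aux (a c : W) (i : B)
    (hlen : cs.length (a * c) = cs.length a + cs.length c)
    (hc : cs.length (c * cs.simple i) + 1 = cs.length c) :
    cs.length (a * c * cs.simple i) + 1 = cs.length (a * c) := by
  have h1 : cs.length (a * c * cs.simple i) ≤ cs.length a + cs.length (c * cs.simple i) := by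
    rw [mul_assoc]; exact cs.length_mul_le a (c * cs.simple i)
  rcases cs.length_mul_simple (a * c) i with hh | hh
  · omega
  · exact hh

lemma ascent_aux (w c : W) (i : B)
    (hlen : cs.length (w * c) = cs.length w + cs.length c)
    (hc : cs.length (cs.simple i * c) + 1 = cs.length c) :
    cs.length (w * cs.simple i) = cs.length w + 1 := by
  have heq : w * c = (w * cs.simple i) * (cs.simple i * c) := by
    rw [mul_assoc, ← mul_assoc (cs.simple i), cs.simple_mul_simple_self, one_mul]
  have h1 : cs.length (w * c) ≤ cs.length (w * cs.simple i) + cs.length (cs.simple i * c) := by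
    rw [heq]; exact cs.length_mul_le _ _
  rcases cs.length_mul_simple w i with hh | hh
  · exact hh
  · omega

/-- The master lemma: for any alternating word within range, each of the two parts of the
partition consists entirely of ascents or entirely of descents. -/
lemma master_lemma {A C : Set B} {x y : W} (hx : IsLongestOf cs A x) (hy : IsLongestOf cs C y)
    (hcomp : ∀ k : ℕ, (orderOf (x * y) = 0 ∨ k ≤ orderOf (x * y)) →
      cs.length (altProd x y k) = altSum (cs.length x) (cs.length y) k ∧
      cs.length (altProd y x k) = altSum (cs.length y) (cs.length x) k)
    (n : ℕ) (hn : orderOf (x * y) = 0 ∨ n ≤ orderOf (x * y)) :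
    ((∀ i ∈ A, cs.length (altProd x y n * cs.simple i) = cs.length (altProd x y n) + 1) ∨
      (∀ i ∈ A, cs.length (altProd x y n * cs.simple i) + 1 = cs.length (altProd x y n))) ∧
    ((∀ i ∈ C, cs.length (altProd x y n * cs.simple i) = cs.length (altProd x y n) + 1) ∨
      (∀ i ∈ C, cs.length (altProd x y n * cs.simple i) + 1 = cs.length (altProd x y n))) := by
  have hxx : x * x = 1 := longest_mul_self cs hx
  have hyy : y * y = 1 := longest_mul_self cs hy
  have hm1 : (x * y) ^ orderOf (x * y) = 1 := pow_orderOf_eq_one _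
  constructor
  · -- the `A` part
    rcases Nat.even_or_odd n with he | ho
    · by_cases hr : orderOf (x * y) = 0 ∨ n + 1 ≤ orderOf (x * y)
      · -- ascent: next letter is x
        left
        intro i hi
        have e : altProd x y (n + 1) = altProd x y n * x := by
          rw [altProd_succ_right, if_pos he]
        have hlen : cs.length (altProd x y n * x) = cs.length (altProd x y n) + cs.length x := by
          rw [← e, (hcomp (n + 1) hr).1, altSum_succ_right, if_pos he, (hcomp n hn).1]
        exact ascent_aux cs _ x i hlen (longest_simple_mul cs hx hi)
      · -- n = orderOf (x*y), even: top element; rewrite as the other word, last letter x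
        right
        intro i hi
        push_neg at hr
        have hnm : n = orderOf (x * y) := by omega
        have hswap : altProd x y n = altProd y x n := by
          rw [hnm]; exact altProd_top hxx hyy hm1
        obtain ⟨j, hj⟩ : ∃ j, n = j + 1 := ⟨n - 1, by omega⟩
        have hoddj : ¬ Even j := by rw [hj, Nat.even_add_one] at he; exact he
        have e : altProd y x n = altProd y x j * x := by
          rw [hj, altProd_succ_right, if_neg hoddj]
        have hlen : cs.length (altProd y x j * x) = cs.length (altProd y x j) + cs.length x := by
          rw [← e, (hcomp n hn).2, hj, altSum_succ_right, if_neg hoddj,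
            (hcomp j (Or.inr (by omega))).2]
        rw [hswap, e]
        exact descent_aux cs _ x i hlen (longest_mul_simple cs hx hi)
    · -- n odd: last letter is x, descent
      right
      intro i hi
      obtain ⟨c, hc⟩ := ho
      obtain ⟨j, hj⟩ : ∃ j, n = j + 1 := ⟨n - 1, by omega⟩
      have hevenj : Even j := by
        have h2 : ¬ Even n := Nat.not_even_iff_odd.mpr ⟨c, hc⟩
        rw [hj, Nat.even_add_one] at h2; simpa using h2
      have hj' : (orderOf (x * y) = 0 ∨ j ≤ orderOf (x * y)) := by
        rcases hn with h | h
        · exact Or.inl h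
        · exact Or.inr (by omega)
      have e : altProd x y n = altProd x y j * x := by
        rw [hj, altProd_succ_right, if_pos hevenj]
      have hlen : cs.length (altProd x y j * x) = cs.length (altProd x y j) + cs.length x := by
        rw [← e, (hcomp n hn).1, hj, altSum_succ_right, if_pos hevenj, (hcomp j hj').1]
      rw [e]
      exact descent_aux cs _ x i hlen (longest_mul_simple cs hx hi)
  · -- the `C` part
    rcases Nat.even_or_odd n with he | ho
    · rcases Nat.eq_zero_or_pos n with rfl | hpos
      · -- n = 0 : w = 1, everything is an ascent
        left
        intro i hi
        show cs.length (altProd x y 0 * cs.simple i) = cs.length (altProd x y 0) + 1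
        rw [show altProd x y 0 = (1 : W) from rfl, one_mul, cs.length_simple, cs.length_one]
      · -- n even positive: last letter is y, descent
        right
        intro i hi
        obtain ⟨j, hj⟩ : ∃ j, n = j + 1 := ⟨n - 1, by omega⟩
        have hoddj : ¬ Even j := by rw [hj, Nat.even_add_one] at he; exact he
        have hj' : (orderOf (x * y) = 0 ∨ j ≤ orderOf (x * y)) := by
          rcases hn with h | h
          · exact Or.inl h
          · exact Or.inr (by omega)
        have e : altProd x y n = altProd x y j * y := by
          rw [hj, altProd_succ_right, if_neg hoddj]
        have hlen : cs.length (altProd x y j * y) = cs.length (altProd x y j) + cs.length y := by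
          rw [← e, (hcomp n hn).1, hj, altSum_succ_right, if_neg hoddj, (hcomp j hj').1]
        rw [e]
        exact descent_aux cs _ y i hlen (longest_mul_simple cs hy hi)
    · by_cases hr : orderOf (x * y) = 0 ∨ n + 1 ≤ orderOf (x * y)
      · -- ascent: next letter is y
        left
        intro i hi
        have hno : ¬ Even n := Nat.not_even_iff_odd.mpr ho
        have e : altProd x y (n + 1) = altProd x y n * y := by
          rw [altProd_succ_right, if_neg hno]
        have hlen : cs.length (altProd x y n * y) = cs.length (altProd x y n) + cs.length y := by
          rw [← e, (hcomp (n + 1) hr).1, altSum_succ_right, if_neg hno, (hcomp n hn).1]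
        exact ascent_aux cs _ y i hlen (longest_simple_mul cs hy hi)
      · -- n = orderOf (x*y), odd: top element; rewrite as the other word, last letter y
        right
        intro i hi
        push_neg at hr
        have hnm : n = orderOf (x * y) := by omega
        have hswap : altProd x y n = altProd y x n := by
          rw [hnm]; exact altProd_top hxx hyy hm1
        obtain ⟨c, hc⟩ := ho
        obtain ⟨j, hj⟩ : ∃ j, n = j + 1 := ⟨n - 1, by omega⟩
        have hevenj : Even j := by
          have h2 : ¬ Even n := Nat.not_even_iff_odd.mpr ⟨c, hc⟩
          rw [hj, Nat.even_add_one] at h2; simpa using h2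
        have e : altProd y x n = altProd y x j * y := by
          rw [hj, altProd_succ_right, if_pos hevenj]
        have hlen : cs.length (altProd y x j * y) = cs.length (altProd y x j) + cs.length y := by
          rw [← e, (hcomp n hn).2, hj, altSum_succ_right, if_pos hevenj,
            (hcomp j (Or.inr (by omega))).2]
        rw [hswap, e]
        exact descent_aux cs _ y i hlen (longest_mul_simple cs hy hi)

end Cox

/-- If all alternating words of `n` letters, `0 ≤ n < |r_α r_β| + 1`, in a spherical
2-partition `{α, β}` are compatible, then the partition is admissible: for every `w`
in `⟨r_α, r_β⟩` and `γ ∈ {α, β}`, either `γ ⊆ I⁺(w)` or `γ ⊆ I⁻(w)`.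
(`orderOf (r_α * r_β) = 0` encodes `|r_α r_β| = ∞`.) -/
theorem admissible_of_compatible {B W : Type*} [Group W] {M : CoxeterMatrix B}
    (cs : CoxeterSystem M W)
    (α β : Set B) (hunion : α ∪ β = Set.univ) (hdisj : Disjoint α β)
    (hα : α.Nonempty) (hβ : β.Nonempty)
    (hsphα : IsSpherical cs α) (hsphβ : IsSpherical cs β)
    (rα rβ : W) (hrα : IsLongestOf cs α rα) (hrβ : IsLongestOf cs β rβ)
    (hcompat : ∀ n : ℕ, (orderOf (rα * rβ) = 0 ∨ n ≤ orderOf (rα * rβ)) →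
      cs.length (altProd rα rβ n) = altSum (cs.length rα) (cs.length rβ) n ∧
      cs.length (altProd rβ rα n) = altSum (cs.length rβ) (cs.length rα) n) :
    ∀ w ∈ Subgroup.closure ({rα, rβ} : Set W), ∀ γ ∈ ({α, β} : Set (Set B)),
      (∀ i ∈ γ, cs.length (w * cs.simple i) = cs.length w + 1) ∨
      (∀ i ∈ γ, cs.length (w * cs.simple i) + 1 = cs.length w) := by
  intro w hw γ hγ
  have hxx : rα * rα = 1 := longest_mul_self cs hrα
  have hyy : rβ * rβ = 1 := longest_mul_self cs hrβ
  have hoswap : orderOf (rβ * rα) = orderOf (rα * rβ) := orderOf_swap hxx hyy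
  obtain ⟨n, hn, hwn⟩ := mem_closure_pair hxx hyy w hw
  have hcomp' : ∀ k : ℕ, (orderOf (rβ * rα) = 0 ∨ k ≤ orderOf (rβ * rα)) →
      cs.length (altProd rβ rα k) = altSum (cs.length rβ) (cs.length rα) k ∧
      cs.length (altProd rα rβ k) = altSum (cs.length rα) (cs.length rβ) k := by
    intro k hk
    rw [hoswap] at hk
    exact ⟨(hcompat k hk).2, (hcompat k hk).1⟩
  rcases hwn with rfl | rfl
  · have H := master_lemma cs hrα hrβ hcompat n hn
    rcases hγ with rfl | hγ
    · exact H.1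
    · rw [Set.mem_singleton_iff] at hγ
      subst hγ
      exact H.2
  · have hn' : orderOf (rβ * rα) = 0 ∨ n ≤ orderOf (rβ * rα) := by rwa [hoswap]
    have H := master_lemma cs hrβ hrα hcomp' n hn'
    rcases hγ with rfl | hγ
    · exact H.2
    · rw [Set.mem_singleton_iff] at hγ
      subst hγ
      exact H.1
end

section
/- Let (W,S) be a finite Coxeter system indexed by I and let α, β ⊆ I be spherical subsets with I = α ∪ β. If there exists n ∈ ℕ such that the alternating products of n factors satisfy prod_n(r_α, r_β) = prod_n(r_β, r_α) = r_I where moreover ℓ(r_I) = Σ_n(ℓ(r_α),ℓ(r_β)), then n equals the order of r_α r_β in W. -/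
lemma altProd_add_two {W : Type*} [Monoid W] (x y : W) (n : ℕ) :
    altProd x y (n + 2) = x * y * altProd x y n := by
  simp [altProd, mul_assoc]

lemma altProd_two_mul_add {W : Type*} [Monoid W] (x y : W) (d m : ℕ) :
    altProd x y (2 * d + m) = (x * y) ^ d * altProd x y m := by
  induction d with
  | zero => simp
  | succ d ih =>
    have h : 2 * (d + 1) + m = (2 * d + m) + 2 := by omega
    rw [h, altProd_add_two, ih, pow_succ']; simp only [mul_assoc]

lemma altSum_add_two (a b n : ℕ) : altSum a b (n + 2) = a + b + altSum a b n := by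
  simp [altSum, add_assoc]

lemma altSum_two_mul_add (a b d m : ℕ) :
    altSum a b (2 * d + m) = d * (a + b) + altSum a b m := by
  induction d with
  | zero => simp
  | succ d ih =>
    have h : 2 * (d + 1) + m = (2 * d + m) + 2 := by omega
    rw [h, altSum_add_two, ih]; ring

lemma length_altProd_le {B W : Type*} [Group W] {M : CoxeterMatrix B}
    (cs : CoxeterSystem M W) (x y : W) (m : ℕ) :
    cs.length (altProd x y m) ≤ altSum (cs.length x) (cs.length y) m := by
  induction m generalizing x y with
  | zero => simp [altProd, altSum]
  | succ m ih =>
    show cs.length (x * altProd y x m) ≤ cs.length x + altSum (cs.length y) (cs.length x) m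
    calc cs.length (x * altProd y x m) ≤ cs.length x + cs.length (altProd y x m) :=
          cs.length_mul_le _ _
      _ ≤ cs.length x + altSum (cs.length y) (cs.length x) m :=
          Nat.add_le_add_left (ih y x) _

lemma IsLongestOf.mul_self {B W : Type*} [Group W] {M : CoxeterMatrix B}
    {cs : CoxeterSystem M W} {α : Set B} {x : W} (h : IsLongestOf cs α x) : x * x = 1 := by
  have hinv : x⁻¹ ∈ Subgroup.closure (cs.simple '' α) := inv_mem h.1
  have heq : x⁻¹ = x := h.2.2 x⁻¹ hinv (by rw [cs.length_inv])
  calc x * x = x * x⁻¹ := by rw [heq]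
    _ = 1 := mul_inv_cancel x

/-- In a finite Coxeter group, if `∏_n(r_α,r_β) = ∏_n(r_β,r_α) = r_I` with
`ℓ(r_I) = Σ_n(ℓ(r_α), ℓ(r_β))`, then `n` is the order of `r_α r_β`. -/
theorem eq_orderOf_of_altProd_eq_longest {B W : Type*} [Group W] {M : CoxeterMatrix B}
    (cs : CoxeterSystem M W) [Finite W]
    (α β : Set B) (hunion : α ∪ β = Set.univ)
    (hα : α.Nonempty) (hβ : β.Nonempty)
    (rα rβ rI : W) (hrα : IsLongestOf cs α rα) (hrβ : IsLongestOf cs β rβ)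
    (hrI : IsLongestOf cs Set.univ rI)
    (n : ℕ)
    (h1 : altProd rα rβ n = rI) (h2 : altProd rβ rα n = rI)
    (hlen : cs.length rI = altSum (cs.length rα) (cs.length rβ) n) :
    n = orderOf (rα * rβ) := by
  have hx2 : rα * rα = 1 := hrα.mul_self
  have hy2 : rβ * rβ = 1 := hrβ.mul_self
  have hI2 : rI * rI = 1 := hrI.mul_self
  obtain ⟨i, hi⟩ := hα
  obtain ⟨j, hj⟩ := hβ
  have ha : 1 ≤ cs.length rα := by
    have hmem : cs.simple i ∈ Subgroup.closure (cs.simple '' α) :=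
      Subgroup.subset_closure ⟨i, hi, rfl⟩
    have := hrα.2.1 _ hmem
    rwa [cs.length_simple] at this
  have hb : 1 ≤ cs.length rβ := by
    have hmem : cs.simple j ∈ Subgroup.closure (cs.simple '' β) :=
      Subgroup.subset_closure ⟨j, hj, rfl⟩
    have := hrβ.2.1 _ hmem
    rwa [cs.length_simple] at this
  have hn1 : 1 ≤ n := by
    by_contra hc
    have hn0 : n = 0 := by omega
    subst hn0
    have hrIone : rI = 1 := h1.symm
    have hmem : cs.simple i ∈ Subgroup.closure (cs.simple '' (Set.univ : Set B)) :=
      Subgroup.subset_closure ⟨i, Set.mem_univ i, rfl⟩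
    have := hrI.2.1 _ hmem
    rw [cs.length_simple, hrIone, cs.length_one] at this
    omega
  set d := orderOf (rα * rβ) with hd
  have hd0 : 0 < d := orderOf_pos _
  have key : (rα * rβ) ^ n = 1 := by
    rcases Nat.even_or_odd n with ⟨k, hk⟩ | ⟨k, hk⟩
    · -- even case : n = k + k
      have hn : n = 2 * k + 0 := by omega
      rw [hn, altProd_two_mul_add] at h1
      simp only [altProd, mul_one] at h1
      have hn' : n = k * 2 := by omega
      rw [hn', pow_mul, h1, sq, hI2]
    · -- odd case : n = 2 * k + 1
      have hxinv : rα⁻¹ = rα := inv_eq_of_mul_eq_one_right hx2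
      have hyinv : rβ⁻¹ = rβ := inv_eq_of_mul_eq_one_right hy2
      have hIinv : rI⁻¹ = rI := inv_eq_of_mul_eq_one_right hI2
      rw [hk, altProd_two_mul_add] at h1 h2
      simp only [altProd, mul_one] at h1 h2
      have hP : (rα * rβ) ^ k = rI * rα := by
        rw [← h1, mul_assoc, hx2, mul_one]
      have hQ : (rβ * rα) ^ k = rI * rβ := by
        rw [← h2, mul_assoc, hy2, mul_one]
      have hrel : ((rα * rβ) ^ k)⁻¹ = (rβ * rα) ^ k := by
        rw [← inv_pow, mul_inv_rev, hxinv, hyinv]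
      have hP2 : (rα * rβ) ^ k = rβ * rI := by
        have h3 : ((rα * rβ) ^ k)⁻¹ = rI * rβ := by rw [hrel, hQ]
        have h4 : (rα * rβ) ^ k = (rI * rβ)⁻¹ := inv_eq_iff_eq_inv.mp h3
        rw [h4, mul_inv_rev, hyinv, hIinv]
      have harith : 2 * k + 1 = k + 1 + k := by omega
      rw [hk, harith, pow_add, pow_succ]
      nth_rewrite 2 [hP2]
      rw [hP]
      calc rI * rα * (rα * rβ) * (rβ * rI) = rI * (rα * rα) * (rβ * rβ) * rI := by group
        _ = 1 := by rw [hx2, hy2, mul_one, mul_one, hI2]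
  have hdvd : d ∣ n := orderOf_dvd_of_pow_eq_one key
  by_contra hne
  have hlt : d < n := lt_of_le_of_ne (Nat.le_of_dvd (by omega) hdvd) (fun h => hne h.symm)
  obtain ⟨c, hc⟩ := hdvd
  have hc0 : c ≠ 0 := by rintro rfl; omega
  have hc1 : c ≠ 1 := by rintro rfl; rw [mul_one] at hc; exact hne hc
  have h2d : 2 * d ≤ n := by
    calc 2 * d = d * 2 := by ring
      _ ≤ d * c := Nat.mul_le_mul_left d (by omega)
      _ = n := hc.symm
  set m := n - 2 * d with hm
  have hnm : n = 2 * d + m := by omega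
  have hpow : (rα * rβ) ^ d = 1 := pow_orderOf_eq_one _
  rw [hnm, altProd_two_mul_add, hpow, one_mul] at h1
  have hle : cs.length rI ≤ altSum (cs.length rα) (cs.length rβ) m :=
    h1 ▸ length_altProd_le cs rα rβ m
  rw [hnm, altSum_two_mul_add] at hlen
  have hpos : 0 < d * (cs.length rα + cs.length rβ) := Nat.mul_pos hd0 (by omega)
  omega
end
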